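/- arXiv:1409.4036 — 5 statements merged into one kernel-verified Lean document; each statement's English description precedes it below -/
import Mathlib

section
/- Choi's theorem: a linear map Φ : M_d(ℂ) → M_d(ℂ) is completely positive if and only if its Choi operator Ω_Φ = (Φ ⊗ Id)[|Ψ_+⟩⟨Ψ_+|] is positive semidefinite. -/
open Matrix Kronecker BigOperators ComplexOrder

noncomputable section

/-- A quantum state: positive semidefinite with unit trace. -/
def IsState {ι : Type*} [Fintype ι] (ρ : Matrix ι ι ℂ) : Prop :=
  ρ.PosSemidef ∧ ρ.trace = 1

/-- Partial transpose on the second tensor factor. -/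
def ptB {ι κ : Type*} (ρ : Matrix (ι × κ) (ι × κ) ℂ) : Matrix (ι × κ) (ι × κ) ℂ :=
  Matrix.of fun p q => ρ (p.1, q.2) (q.1, p.2)

/-- Partial transpose on the first tensor factor. -/
def ptA {ι κ : Type*} (ρ : Matrix (ι × κ) (ι × κ) ℂ) : Matrix (ι × κ) (ι × κ) ℂ :=
  Matrix.of fun p q => ρ (q.1, p.2) (p.1, q.2)

/-- The maximally entangled projector |Ψ₊⟩⟨Ψ₊|. -/
def maxEntProj (ι : Type*) [Fintype ι] [DecidableEq ι] : Matrix (ι × ι) (ι × ι) ℂ :=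
  Matrix.of fun p q => if p.1 = p.2 ∧ q.1 = q.2 then (Fintype.card ι : ℂ)⁻¹ else 0

/-- Ampliation Φ ⊗ Id acting on the first factor. -/
def amplify {ι κ : Type*} (Φ : Matrix ι ι ℂ → Matrix ι ι ℂ)
    (M : Matrix (ι × κ) (ι × κ) ℂ) : Matrix (ι × κ) (ι × κ) ℂ :=
  Matrix.of fun p q => Φ (Matrix.of fun i j => M (i, p.2) (j, q.2)) p.1 q.1

/-- Ampliation Id ⊗ Φ acting on the second factor. -/
def amplifyL {ι κ : Type*} (Φ : Matrix κ κ ℂ → Matrix κ κ ℂ)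
    (M : Matrix (ι × κ) (ι × κ) ℂ) : Matrix (ι × κ) (ι × κ) ℂ :=
  Matrix.of fun p q => Φ (Matrix.of fun k l => M (p.1, k) (q.1, l)) p.2 q.2

/-- The tensor product map Φ₁ ⊗ Φ₂. -/
def tensorMap {ι κ : Type*} (Φ₁ : Matrix ι ι ℂ → Matrix ι ι ℂ)
    (Φ₂ : Matrix κ κ ℂ → Matrix κ κ ℂ)
    (M : Matrix (ι × κ) (ι × κ) ℂ) : Matrix (ι × κ) (ι × κ) ℂ :=
  amplify Φ₁ (amplifyL Φ₂ M)

/-- The Choi operator Ω_Φ = (Φ ⊗ Id)[|Ψ₊⟩⟨Ψ₊|]. -/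
def choi {ι : Type*} [Fintype ι] [DecidableEq ι] (Φ : Matrix ι ι ℂ → Matrix ι ι ℂ) :
    Matrix (ι × ι) (ι × ι) ℂ := amplify Φ (maxEntProj ι)

/-- Complete positivity via positivity of all ampliations. -/
def IsCP {ι : Type*} [Fintype ι] (Φ : Matrix ι ι ℂ → Matrix ι ι ℂ) : Prop :=
  ∀ (k : ℕ) (M : Matrix (ι × Fin k) (ι × Fin k) ℂ), M.PosSemidef → (amplify Φ M).PosSemidef

/-- Partial trace over the second tensor factor. -/
def ptrace2 {ι κ : Type*} [Fintype κ] (M : Matrix (ι × κ) (ι × κ) ℂ) : Matrix ι ι ℂ :=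
  Matrix.of fun i j => ∑ k, M (i, k) (j, k)

/-- Product vector u ⊗ v. -/
def prodVec {ι κ : Type*} (u : ι → ℂ) (v : κ → ℂ) : ι × κ → ℂ := fun p => u p.1 * v p.2

/-! If `M = Bᴴ * B`, linearity of `Φ` writes `(Φ ⊗ Id)(M)` as a sum over the rows `r` of `B` of
congruences `(1 ⊗ Bᵣ)ᴴ * Ω * (1 ⊗ Bᵣ)` of the unnormalised Choi matrix `Ω = ∑ Φ(Eₐᵦ) ⊗ Eₐᵦ`,
where `Bᵣ` is the row `r` reshaped into a matrix; so positivity of `Ω` passes to every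
ampliation. Conversely the Choi operator is itself the ampliation of the positive projector
onto `Ψ₊`. -/

section Choi

variable {ι κ ρ : Type*} [Fintype ι] [DecidableEq ι]

def unnormalizedChoi (Φ : Matrix ι ι ℂ →ₗ[ℂ] Matrix ι ι ℂ) : Matrix (ι × ι) (ι × ι) ℂ :=
  Matrix.of fun p q => Φ (single p.2 q.2 1) p.1 q.1

lemma maxEntProj_eq_smul_vecMulVec :
    maxEntProj ι = (Fintype.card ι : ℂ)⁻¹ •
      vecMulVec (fun p : ι × ι => if p.1 = p.2 then 1 else 0)
        (star fun p : ι × ι => if p.1 = p.2 then 1 else 0) := by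
  ext p q
  simp [maxEntProj, vecMulVec_apply, ← ite_and, and_comm]

lemma maxEntProj_posSemidef : (maxEntProj ι).PosSemidef := by
  rw [maxEntProj_eq_smul_vecMulVec]
  exact (posSemidef_vecMulVec_self_star _).smul (by positivity)

lemma card_smul_choi (Φ : Matrix ι ι ℂ →ₗ[ℂ] Matrix ι ι ℂ) :
    (Fintype.card ι : ℂ) • choi Φ = unnormalizedChoi Φ := by
  ext ⟨x, a⟩ ⟨y, b⟩
  have : Nonempty ι := ⟨x⟩
  have hcard : (Fintype.card ι : ℂ) ≠ 0 := Nat.cast_ne_zero.mpr Fintype.card_ne_zero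
  have hblock : (Matrix.of fun i j => maxEntProj ι (i, a) (j, b)) =
      (Fintype.card ι : ℂ)⁻¹ • single a b 1 := by
    ext i j
    simp [maxEntProj, single_apply, eq_comm]
  rw [Matrix.smul_apply, choi, amplify, of_apply, hblock, map_smul, Matrix.smul_apply,
    smul_eq_mul, smul_eq_mul, mul_inv_cancel_left₀ hcard, unnormalizedChoi, of_apply]

lemma amplify_apply (Φ : Matrix ι ι ℂ →ₗ[ℂ] Matrix ι ι ℂ) (M : Matrix (ι × κ) (ι × κ) ℂ)
    (x y : ι) (s t : κ) :
    amplify Φ M (x, s) (y, t) = ∑ a, ∑ b, M (a, s) (b, t) * unnormalizedChoi Φ (x, a) (y, b) := by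
  have hblock : (Matrix.of fun i j => M (i, s) (j, t)) =
      ∑ a, ∑ b, M (a, s) (b, t) • single a b (1 : ℂ) := by
    ext i j
    simp [Matrix.sum_apply, single_apply, ite_and]
  rw [amplify, of_apply, hblock]
  simp only [map_sum, map_smul, Matrix.sum_apply, Matrix.smul_apply, smul_eq_mul,
    unnormalizedChoi, of_apply]

lemma amplify_conjTranspose_mul_self [Fintype ρ] (Φ : Matrix ι ι ℂ →ₗ[ℂ] Matrix ι ι ℂ)
    (B : Matrix ρ (ι × κ) ℂ) :
    amplify Φ (Bᴴ * B) = ∑ r, ((1 : Matrix ι ι ℂ) ⊗ₖ of fun a t => B r (a, t))ᴴ *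
      unnormalizedChoi Φ * ((1 : Matrix ι ι ℂ) ⊗ₖ of fun a t => B r (a, t)) := by
  ext ⟨x, s⟩ ⟨y, t⟩
  rw [amplify_apply]
  simp only [mul_apply, conjTranspose_apply, RCLike.star_def, Finset.sum_mul, Matrix.sum_apply,
    kroneckerMap_apply, one_apply, of_apply, ite_mul, one_mul, zero_mul, apply_ite (starRingEnd ℂ),
    map_zero, Fintype.sum_prod_type, Finset.sum_ite_irrel, Finset.sum_const_zero,
    Finset.sum_ite_eq', Finset.mem_univ, if_true, mul_ite, mul_zero]
  rw [Finset.sum_comm_cycle]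
  exact Finset.sum_congr rfl fun r _ => Finset.sum_comm.trans <|
    Finset.sum_congr rfl fun b _ => Finset.sum_congr rfl fun a _ => by ring

open scoped MatrixOrder in
lemma posSemidef_amplify_of_posSemidef_choi [Fintype κ] {Φ : Matrix ι ι ℂ →ₗ[ℂ] Matrix ι ι ℂ}
    (hC : (choi Φ).PosSemidef) {M : Matrix (ι × κ) (ι × κ) ℂ} (hM : M.PosSemidef) :
    (amplify Φ M).PosSemidef := by
  classical
  obtain ⟨B, rfl⟩ := CStarAlgebra.nonneg_iff_eq_star_mul_self.mp hM.nonneg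
  rw [star_eq_conjTranspose, amplify_conjTranspose_mul_self, ← card_smul_choi]
  exact posSemidef_sum _ fun r _ => (hC.smul (by positivity)).conjTranspose_mul_mul_same _

end Choi

/-- Choi's theorem. -/
theorem choi_CP_iff {d : ℕ}
    (Φ : Matrix (Fin d) (Fin d) ℂ →ₗ[ℂ] Matrix (Fin d) (Fin d) ℂ) :
    IsCP ⇑Φ ↔ (choi ⇑Φ).PosSemidef :=
  ⟨fun h => h d _ maxEntProj_posSemidef,
    fun hC _ _ hM => posSemidef_amplify_of_posSemidef_choi hC hM⟩
end
end

section
/- Sufficient condition for PPT-inducing: if Φ is a quantum channel on M_m(ℂ) ⊗ M_n(ℂ) whose partially transposed Choi operator Ω_Φ^{A(B)^T A'B'} is positive semidefinite, then Φ[ρ] is PPT (with respect to A|B) for every input state ρ. -/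
/-!
By linearity of `Φ` and the definition of the Choi operator, `ptB (Φ ρ)` is a positive multiple of
the link product of `Θ = ptOutB (choi Φ)` with `ρ`. Decomposing `ρ = ∑ᵢ vᵢ vᵢᴴ`, each summand of
that link product is a congruence `Cᵢᴴ Θ Cᵢ` with `Cᵢ = 1 ⊗ conj vᵢ`, hence positive semidefinite
when `Θ` is.
-/

open Matrix Kronecker BigOperators ComplexOrder

noncomputable section

/-- Partial transpose on the output B factor of a Choi operator on (A×B)×(A'×B'). -/
def ptOutB {m n : ℕ}
    (Ω : Matrix ((Fin m × Fin n) × (Fin m × Fin n)) ((Fin m × Fin n) × (Fin m × Fin n)) ℂ) :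
    Matrix ((Fin m × Fin n) × (Fin m × Fin n)) ((Fin m × Fin n) × (Fin m × Fin n)) ℂ :=
  Matrix.of fun p q => Ω ((p.1.1, q.1.2), p.2) ((q.1.1, p.1.2), q.2)

section LinkProduct

variable {ι κ 𝕜 : Type*} [Fintype κ] [RCLike 𝕜]

/-- The link product `Tr_κ[Θ (1 ⊗ ρᵀ)]`. -/
def Matrix.linkProduct (Θ : Matrix (ι × κ) (ι × κ) 𝕜) (ρ : Matrix κ κ 𝕜) : Matrix ι ι 𝕜 :=
  of fun P Q => ∑ e, ∑ f, ρ e f * Θ (P, e) (Q, f)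

lemma Matrix.linkProduct_sum {α : Type*} (Θ : Matrix (ι × κ) (ι × κ) 𝕜) (s : Finset α)
    (ρ : α → Matrix κ κ 𝕜) : Θ.linkProduct (∑ a ∈ s, ρ a) = ∑ a ∈ s, Θ.linkProduct (ρ a) := by
  ext P Q
  simp only [linkProduct, of_apply, sum_apply, Finset.sum_mul, Finset.sum_comm (s := s)]

def Matrix.idKronCol (ι : Type*) [DecidableEq ι] (w : κ → 𝕜) : Matrix (ι × κ) ι 𝕜 :=
  of fun p q => if p.1 = q then w p.2 else 0

variable [Fintype ι]

lemma Matrix.linkProduct_vecMulVec [DecidableEq ι] (Θ : Matrix (ι × κ) (ι × κ) 𝕜) (v : κ → 𝕜) :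
    Θ.linkProduct (vecMulVec v (star v)) = (idKronCol ι (star v))ᴴ * Θ * idKronCol ι (star v) := by
  ext P Q
  simp only [linkProduct, of_apply]
  rw [Finset.sum_comm]
  simp [idKronCol, vecMulVec_apply, mul_apply, Fintype.sum_prod_type, apply_ite star, ite_mul,
    Finset.sum_ite_irrel, Finset.sum_mul, mul_right_comm]

theorem Matrix.PosSemidef.linkProduct {Θ : Matrix (ι × κ) (ι × κ) 𝕜} {ρ : Matrix κ κ 𝕜}
    (hΘ : Θ.PosSemidef) (hρ : ρ.PosSemidef) : (Θ.linkProduct ρ).PosSemidef := by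
  classical
  obtain ⟨r, v, rfl⟩ := posSemidef_iff_eq_sum_vecMulVec.mp hρ
  rw [linkProduct_sum]
  exact posSemidef_sum _ fun i _ => linkProduct_vecMulVec Θ (v i) ▸ hΘ.conjTranspose_mul_mul_same _

end LinkProduct

lemma LinearMap.matrix_apply_eq_sum {R m n : Type*} [CommSemiring R] [Fintype m] [Fintype n]
    [DecidableEq m] [DecidableEq n] (Φ : Matrix m n R →ₗ[R] Matrix m n R) (X : Matrix m n R)
    (i : m) (j : n) : Φ X i j = ∑ e, ∑ f, X e f * Φ (Matrix.single e f 1) i j := by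
  conv_lhs => rw [X.matrix_eq_sum_single]
  simp only [map_sum, Matrix.sum_apply]
  refine Finset.sum_congr rfl fun e _ => Finset.sum_congr rfl fun f _ => ?_
  rw [← smul_eq_mul, ← Matrix.smul_apply, ← map_smul, Matrix.smul_single, smul_eq_mul, mul_one]

lemma choi_apply {ι : Type*} [Fintype ι] [DecidableEq ι] (Φ : Matrix ι ι ℂ →ₗ[ℂ] Matrix ι ι ℂ)
    (x e y f : ι) :
    choi Φ (x, e) (y, f) = (Fintype.card ι : ℂ)⁻¹ * Φ (Matrix.single e f 1) x y := by
  have hslice : (of fun i j => maxEntProj ι (i, e) (j, f)) =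
      (Fintype.card ι : ℂ)⁻¹ • Matrix.single e f 1 := by
    ext i j
    simp [maxEntProj, Matrix.single_apply, eq_comm]
  rw [← smul_eq_mul, ← Matrix.smul_apply, ← map_smul, ← hslice]
  rfl

lemma ptB_map_eq_card_smul_linkProduct {m n : ℕ}
    (Φ : Matrix (Fin m × Fin n) (Fin m × Fin n) ℂ →ₗ[ℂ] Matrix (Fin m × Fin n) (Fin m × Fin n) ℂ)
    (ρ : Matrix (Fin m × Fin n) (Fin m × Fin n) ℂ) :
    ptB (Φ ρ) = (Fintype.card (Fin m × Fin n) : ℂ) • (ptOutB (choi Φ)).linkProduct ρ := by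
  ext P Q
  have hcard : (Fintype.card (Fin m × Fin n) : ℂ) ≠ 0 := by
    have : Nonempty (Fin m × Fin n) := ⟨P⟩
    exact_mod_cast Fintype.card_ne_zero
  simp only [ptB, ptOutB, linkProduct, of_apply, Matrix.smul_apply, smul_eq_mul, choi_apply,
    Finset.mul_sum, mul_left_comm _ (_ : ℂ)⁻¹, inv_mul_cancel_left₀ hcard]
  exact Φ.matrix_apply_eq_sum ρ _ _

theorem ptChoi_psd_implies_PPT_inducing_general {m n : ℕ}
    (Φ : Matrix (Fin m × Fin n) (Fin m × Fin n) ℂ →ₗ[ℂ]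
         Matrix (Fin m × Fin n) (Fin m × Fin n) ℂ)
    (h : (ptOutB (choi ⇑Φ)).PosSemidef) :
    ∀ ρ, IsState ρ → (ptB (Φ ρ)).PosSemidef := by
  intro ρ hρ
  rw [ptB_map_eq_card_smul_linkProduct]
  exact (h.linkProduct hρ.1).smul (Nat.cast_nonneg _)

/-- sufficient condition — if the partially transposed Choi operator of a
channel is positive semidefinite, the channel is PPT-inducing. -/
theorem ptChoi_psd_implies_PPT_inducing {m n : ℕ}
    (Φ : Matrix (Fin m × Fin n) (Fin m × Fin n) ℂ →ₗ[ℂ]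
         Matrix (Fin m × Fin n) (Fin m × Fin n) ℂ)
    (hCP : IsCP ⇑Φ) (hTP : ∀ X, (Φ X).trace = X.trace)
    (h : (ptOutB (choi ⇑Φ)).PosSemidef) :
    ∀ ρ, IsState ρ → (ptB (Φ ρ)).PosSemidef :=
  ptChoi_psd_implies_PPT_inducing_general Φ h
end
end

section
/- One-sided channels: the channel Φ ⊗ Id_B on M_m(ℂ) ⊗ M_n(ℂ) with n ≥ m is PPT-inducing (maps every state to a PPT state) if and only if the Choi operator Ω_Φ of Φ is PPT. -/
open Matrix Kronecker BigOperators ComplexOrder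

noncomputable section

/-!
Transposing the second factor turns `ptB ((Φ ⊗ id) ρ)` into `((Φ ∘ T) ⊗ id) ρᵀ` and `ptB Ω_Φ`
into the Choi matrix of `Φ ∘ T`, so sufficiency is Choi's theorem for `Φ ∘ T` applied to the
state `ρᵀ`. Choi's theorem itself reduces to rank-one inputs: the ampliation of a linear map `Ψ`
sends `v v*` to `card ι • W* Ω_Ψ W` with `W = 1 ⊗ V`, where `V i k = conj (v (i, k))`.
For necessity, an embedding `ℂ^m → ℂ^n` carries the maximally entangled state of `ℂ^m ⊗ ℂ^m`
to a state of `ℂ^m ⊗ ℂ^n` whose compression back to `ℂ^m ⊗ ℂ^m` is the original one, and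
`ptB ∘ (Φ ⊗ id)` commutes with this compression.
-/

variable {ι κ : Type*}

lemma amplify_sum (Φ : Matrix ι ι ℂ →ₗ[ℂ] Matrix ι ι ℂ) {τ : Type*} (s : Finset τ)
    (M : τ → Matrix (ι × κ) (ι × κ) ℂ) :
    amplify Φ (∑ t ∈ s, M t) = ∑ t ∈ s, amplify Φ (M t) := by
  ext p q
  have hslice : (Matrix.of fun i j => (∑ t ∈ s, M t) (i, p.2) (j, q.2))
      = ∑ t ∈ s, Matrix.of fun i j => M t (i, p.2) (j, q.2) := by
    ext i j
    simp [Matrix.sum_apply]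
  change Φ (Matrix.of fun i j => (∑ t ∈ s, M t) (i, p.2) (j, q.2)) p.1 q.1 = _
  rw [hslice, map_sum, Matrix.sum_apply, Matrix.sum_apply]
  rfl

lemma ptB_amplify (Φ : Matrix ι ι ℂ → Matrix ι ι ℂ) (M : Matrix (ι × κ) (ι × κ) ℂ) :
    ptB (amplify Φ M) = amplify (fun X => Φ Xᵀ) Mᵀ :=
  rfl

lemma ptB_amplify_submatrix (Φ : Matrix ι ι ℂ → Matrix ι ι ℂ) {τ : Type*} (f : τ → κ)
    (M : Matrix (ι × κ) (ι × κ) ℂ) :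
    (ptB (amplify Φ M)).submatrix (Prod.map id f) (Prod.map id f) =
      ptB (amplify Φ (M.submatrix (Prod.map id f) (Prod.map id f))) :=
  rfl

def maxEntVecAlong [DecidableEq κ] (f : ι → κ) : ι × κ → ℂ :=
  fun p => if f p.1 = p.2 then 1 else 0

def maxEntProjAlong [Fintype ι] [DecidableEq κ] (f : ι → κ) : Matrix (ι × κ) (ι × κ) ℂ :=
  (Fintype.card ι : ℂ)⁻¹ • vecMulVec (maxEntVecAlong f) (star (maxEntVecAlong f))

lemma isState_maxEntProjAlong [Fintype ι] [Nonempty ι] [Fintype κ] [DecidableEq κ]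
    (f : ι → κ) : IsState (maxEntProjAlong f) := by
  refine ⟨(posSemidef_vecMulVec_self_star _).smul (inv_nonneg.mpr (Nat.cast_nonneg _)), ?_⟩
  simp [maxEntProjAlong, maxEntVecAlong, trace_vecMulVec, dotProduct, Fintype.sum_prod_type]

variable [Fintype ι] [DecidableEq ι]

lemma maxEntProj_transpose : (maxEntProj ι)ᵀ = maxEntProj ι := by
  ext p q
  simp [maxEntProj, and_comm]

lemma ptB_choi (Φ : Matrix ι ι ℂ → Matrix ι ι ℂ) : ptB (choi Φ) = choi (fun X => Φ Xᵀ) := by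
  rw [choi, ptB_amplify, maxEntProj_transpose, choi]

lemma maxEntProjAlong_submatrix [DecidableEq κ] {f : ι → κ} (hf : f.Injective) :
    (maxEntProjAlong f).submatrix (Prod.map id f) (Prod.map id f) = maxEntProj ι := by
  ext p q
  simp [maxEntProjAlong, maxEntVecAlong, maxEntProj, vecMulVec_apply, hf.eq_iff, ite_and]
  split_ifs <;> rfl

lemma choi_apply_s11 (Ψ : Matrix ι ι ℂ →ₗ[ℂ] Matrix ι ι ℂ) (a b i j : ι) :
    choi Ψ (a, i) (b, j) = (Fintype.card ι : ℂ)⁻¹ * Ψ (single i j 1) a b := by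
  have hslice : (Matrix.of fun k l => maxEntProj ι (k, i) (l, j))
      = (Fintype.card ι : ℂ)⁻¹ • single i j 1 := by
    ext k l
    simp [maxEntProj, single, eq_comm]
  change Ψ (Matrix.of fun k l => maxEntProj ι (k, i) (l, j)) a b = _
  rw [hslice, map_smul, Matrix.smul_apply, smul_eq_mul]

lemma amplify_apply_eq_sum_choi (Ψ : Matrix ι ι ℂ →ₗ[ℂ] Matrix ι ι ℂ)
    (M : Matrix (ι × κ) (ι × κ) ℂ) (p q : ι × κ) :
    amplify Ψ M p q =
      Fintype.card ι * ∑ i, ∑ j, M (i, p.2) (j, q.2) * choi Ψ (p.1, i) (q.1, j) := by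
  have : Nonempty ι := ⟨p.1⟩
  have hslice : (Matrix.of fun i j => M (i, p.2) (j, q.2))
      = ∑ i, ∑ j, M (i, p.2) (j, q.2) • single i j (1 : ℂ) := by
    ext k l
    simp [Matrix.sum_apply, single, ite_and]
  change Ψ (Matrix.of fun i j => M (i, p.2) (j, q.2)) p.1 q.1 = _
  simp only [hslice, map_sum, map_smul, Matrix.sum_apply, Matrix.smul_apply, smul_eq_mul,
    choi_apply_s11, Finset.mul_sum]
  field_simp

lemma amplify_vecMulVec_self_star [Fintype κ] (Ψ : Matrix ι ι ℂ →ₗ[ℂ] Matrix ι ι ℂ)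
    (v : ι × κ → ℂ) :
    amplify Ψ (vecMulVec v (star v)) = (Fintype.card ι : ℂ) •
      (((1 : Matrix ι ι ℂ) ⊗ₖ of fun i k => star (v (i, k)))ᴴ * choi Ψ *
        ((1 : Matrix ι ι ℂ) ⊗ₖ of fun i k => star (v (i, k)))) := by
  ext p q
  rw [amplify_apply_eq_sum_choi]
  simp only [Matrix.smul_apply, Matrix.mul_apply, conjTranspose_apply, kroneckerMap_apply,
    one_apply, of_apply, vecMulVec_apply, Fintype.sum_prod_type, Pi.star_apply, ite_mul,
    mul_ite, one_mul, zero_mul, mul_zero, apply_ite star, star_star, star_zero,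
    Finset.sum_ite_irrel, Finset.sum_ite_eq', Finset.sum_const_zero, Finset.mem_univ, if_true,
    smul_eq_mul, Finset.mul_sum, Finset.sum_mul]
  rw [Finset.sum_comm]
  exact Finset.sum_congr rfl fun _ _ => Finset.sum_congr rfl fun _ _ => by ring

theorem amplify_posSemidef_of_choi [Fintype κ] (Ψ : Matrix ι ι ℂ →ₗ[ℂ] Matrix ι ι ℂ)
    (hΨ : (choi Ψ).PosSemidef) {M : Matrix (ι × κ) (ι × κ) ℂ} (hM : M.PosSemidef) :
    (amplify Ψ M).PosSemidef := by
  obtain ⟨r, v, rfl⟩ := posSemidef_iff_eq_sum_vecMulVec.mp hM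
  rw [amplify_sum]
  refine posSemidef_sum _ fun t _ => ?_
  rw [amplify_vecMulVec_self_star]
  exact (hΨ.conjTranspose_mul_mul_same _).smul (Nat.cast_nonneg _)

theorem ptB_amplify_posSemidef_of_ptB_choi [Fintype κ] (Φ : Matrix ι ι ℂ →ₗ[ℂ] Matrix ι ι ℂ)
    (hΦ : (ptB (choi Φ)).PosSemidef) {ρ : Matrix (ι × κ) (ι × κ) ℂ} (hρ : ρ.PosSemidef) :
    (ptB (amplify Φ ρ)).PosSemidef := by
  rw [ptB_choi] at hΦ
  rw [ptB_amplify]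
  exact amplify_posSemidef_of_choi (Φ ∘ₗ (transposeLinearEquiv ι ι ℂ ℂ).toLinearMap) hΦ
    hρ.transpose

theorem ptB_choi_posSemidef_of_ptB_amplify [Fintype κ] [DecidableEq κ] (f : ι ↪ κ)
    (Φ : Matrix ι ι ℂ → Matrix ι ι ℂ)
    (h : ∀ ρ : Matrix (ι × κ) (ι × κ) ℂ, IsState ρ → (ptB (amplify Φ ρ)).PosSemidef) :
    (ptB (choi Φ)).PosSemidef := by
  cases isEmpty_or_nonempty ι
  · rw [Subsingleton.elim (ptB (choi Φ)) 0]
    exact .zero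
  · rw [choi, ← maxEntProjAlong_submatrix f.injective, ← ptB_amplify_submatrix]
    exact (h _ (isState_maxEntProjAlong f)).submatrix _

theorem oneSided_PPT_inducing_iff_general {m n : ℕ} (hmn : m ≤ n)
    (Φ : Matrix (Fin m) (Fin m) ℂ →ₗ[ℂ] Matrix (Fin m) (Fin m) ℂ) :
    (∀ ρ : Matrix (Fin m × Fin n) (Fin m × Fin n) ℂ, IsState ρ →
      (ptB (amplify ⇑Φ ρ)).PosSemidef) ↔ (ptB (choi ⇑Φ)).PosSemidef :=
  ⟨ptB_choi_posSemidef_of_ptB_amplify (Fin.castLEEmb hmn) Φ,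
    fun hΦ _ hρ => ptB_amplify_posSemidef_of_ptB_choi Φ hΦ hρ.1⟩

/-- the one-sided channel Φ ⊗ Id (with n ≥ m) is PPT-inducing iff the Choi
operator of Φ is PPT. -/
theorem oneSided_PPT_inducing_iff {m n : ℕ} (hmn : m ≤ n)
    (Φ : Matrix (Fin m) (Fin m) ℂ →ₗ[ℂ] Matrix (Fin m) (Fin m) ℂ)
    (hCP : IsCP ⇑Φ) (hTP : ∀ X, (Φ X).trace = X.trace) :
    (∀ ρ : Matrix (Fin m × Fin n) (Fin m × Fin n) ℂ, IsState ρ →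
      (ptB (amplify ⇑Φ ρ)).PosSemidef) ↔ (ptB (choi ⇑Φ)).PosSemidef :=
  oneSided_PPT_inducing_iff_general hmn Φ
end
end

section
/- For the two-qutrit local depolarizing channel Φ_q ⊗ Φ_q with Φ_q[X] = qX + (1−q)tr(X)I/3 applied to the pure input |ψ⟩ = (|11⟩ + |22⟩)/√2, the minimal eigenvalue of the partial transpose of the output is nonnegative if and only if q ≤ (1+√3)/(4+√3). -/
open Matrix Kronecker BigOperators ComplexOrder

noncomputable section

/-- The depolarizing map Φ_q[X] = qX + (1−q) tr(X) I/d. -/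
def depol (d : ℕ) (q : ℝ) (X : Matrix (Fin d) (Fin d) ℂ) : Matrix (Fin d) (Fin d) ℂ :=
  (q : ℂ) • X + ((1 - q : ℝ) : ℂ) • X.trace • ((d : ℂ)⁻¹ • (1 : Matrix (Fin d) (Fin d) ℂ))

/-- The Schmidt-rank-2 input state |ψ⟩ = (|11⟩ + |22⟩)/√2 of two qutrits. -/
def psiTwo : Fin 3 × Fin 3 → ℂ :=
  fun p => if (p.1 = 0 ∧ p.2 = 0) ∨ (p.1 = 1 ∧ p.2 = 1)
    then (((Real.sqrt 2)⁻¹ : ℝ) : ℂ) else 0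


/-!
Expanding both channels gives `(Φ_q ⊗ Φ_q)[ρ] = q² ρ + q(1-q)/d (ρ_A ⊗ 1 + 1 ⊗ ρ_B) + (1-q)²/d² 1`.
The marginals of `ψ = (|00⟩ + |11⟩)/√2` (basis labels start at 0) are diagonal, so after the partial
transpose the only off-diagonal entries are the two entries `q²/2` linking `|01⟩` and `|10⟩`,
inherited from the coherence of `ψ`. Hence the output is diagonal in the product basis with `|01⟩`,
`|10⟩` replaced by `|01⟩ ± |10⟩`, with eigenvalues `(5q² + 2q + 2)/18`, `(1 - q)(q + 2)/18`,
`(1 - q)²/9` and `(2 + 2q - 13q²)/18`. The last one, on `|01⟩ - |10⟩`, has roots `(1 ± 3√3)/13`,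
the lower one below `-1/8`, and `(1 + 3√3)/13 = (1 + √3)/(4 + √3)`; where it is nonnegative,
`q ≤ 1` and the other three are nonnegative as well.
-/

def ptrace1 {ι κ : Type*} [Fintype ι] (M : Matrix (ι × κ) (ι × κ) ℂ) : Matrix κ κ ℂ :=
  Matrix.of fun k l => ∑ i, M (i, k) (i, l)

theorem amplifyL_depol {ι : Type*} {d : ℕ} (q : ℝ) (M : Matrix (ι × Fin d) (ι × Fin d) ℂ) :
    amplifyL (depol d q) M = (q : ℂ) • M + (((1 - q) / d : ℝ) : ℂ) • (ptrace2 M ⊗ₖ 1) := by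
  ext ⟨i, k⟩ ⟨j, l⟩
  simp [amplifyL, depol, ptrace2, trace, one_apply, div_eq_mul_inv, mul_assoc, mul_comm,
    mul_left_comm]

theorem amplify_depol {κ : Type*} {d : ℕ} (q : ℝ) (M : Matrix (Fin d × κ) (Fin d × κ) ℂ) :
    amplify (depol d q) M = (q : ℂ) • M + (((1 - q) / d : ℝ) : ℂ) • (1 ⊗ₖ ptrace1 M) := by
  ext ⟨i, k⟩ ⟨j, l⟩
  simp [amplify, depol, ptrace1, trace, one_apply, div_eq_mul_inv, mul_assoc, mul_comm,
    mul_left_comm]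

theorem tensorMap_depol {d : ℕ} (q : ℝ) (M : Matrix (Fin d × Fin d) (Fin d × Fin d) ℂ) :
    tensorMap (depol d q) (depol d q) M =
      (q : ℂ) ^ 2 • M + ((q * (1 - q) / d : ℝ) : ℂ) • (ptrace2 M ⊗ₖ 1 + 1 ⊗ₖ ptrace1 M)
        + ((((1 - q) ^ 2 / d ^ 2 : ℝ) : ℂ) * M.trace) • 1 := by
  rw [tensorMap, amplifyL_depol, amplify_depol]
  ext ⟨i, k⟩ ⟨j, l⟩
  by_cases hij : i = j <;> by_cases hkl : k = l <;>
    simp [hij, hkl, ptrace1, ptrace2, trace, Fintype.sum_prod_type, one_apply,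
      Finset.sum_add_distrib, ← Finset.mul_sum] <;>
    ring

theorem vecMulVec_psiTwo_apply (p r : Fin 3 × Fin 3) :
    vecMulVec psiTwo (star psiTwo) p r =
      if (p = (0, 0) ∨ p = (1, 1)) ∧ (r = (0, 0) ∨ r = (1, 1)) then 1 / 2 else 0 := by
  have h : (((Real.sqrt 2)⁻¹ : ℝ) : ℂ) * (((Real.sqrt 2)⁻¹ : ℝ) : ℂ) = 1 / 2 := by
    rw [← Complex.ofReal_mul, ← mul_inv, Real.mul_self_sqrt zero_le_two]
    norm_num
  simp only [vecMulVec_apply, psiTwo, Pi.star_apply, Prod.ext_iff]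
  split_ifs <;> simp_all

theorem ptrace2_psiTwo :
    ptrace2 (vecMulVec psiTwo (star psiTwo)) = diagonal ![1 / 2, 1 / 2, 0] := by
  ext i j
  fin_cases i <;> fin_cases j <;> simp [ptrace2, vecMulVec_psiTwo_apply, Fin.sum_univ_three]

theorem ptrace1_psiTwo :
    ptrace1 (vecMulVec psiTwo (star psiTwo)) = diagonal ![1 / 2, 1 / 2, 0] := by
  ext i j
  fin_cases i <;> fin_cases j <;> simp [ptrace1, vecMulVec_psiTwo_apply, Fin.sum_univ_three]

theorem trace_psiTwo : (vecMulVec psiTwo (star psiTwo)).trace = 1 := by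
  simp [trace, vecMulVec_psiTwo_apply, Fintype.sum_prod_type, Fin.sum_univ_three]
  norm_num

def depolEigSym (q : ℝ) : ℝ := (5 * q ^ 2 + 2 * q + 2) / 18

def depolEigAntisym (q : ℝ) : ℝ := (2 + 2 * q - 13 * q ^ 2) / 18

/-- The eigenvalues of the output partial transpose on the product basis vectors other than
`|01⟩, |10⟩`; the `{|01⟩, |10⟩}` block is carried by `symVec` and `antisymVec`. -/
def depolPTDiag (q : ℝ) (p : Fin 3 × Fin 3) : ℝ :=
  if p = (0, 1) ∨ p = (1, 0) then 0
  else if p = (2, 2) then (1 - q) ^ 2 / 9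
  else if p.1 = 2 ∨ p.2 = 2 then (1 - q) * (q + 2) / 18
  else depolEigSym q

def symVec : Fin 3 × Fin 3 → ℂ := Pi.single (0, 1) 1 + Pi.single (1, 0) 1

def antisymVec : Fin 3 × Fin 3 → ℂ := Pi.single (0, 1) 1 - Pi.single (1, 0) 1

theorem depolEigSym_pos (q : ℝ) : 0 < depolEigSym q := by
  unfold depolEigSym
  nlinarith [sq_nonneg (5 * q + 1)]

theorem depolPTDiag_nonneg {q : ℝ} (hq : -2 ≤ q) (hq' : q ≤ 1) : 0 ≤ depolPTDiag q := fun p => by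
  unfold depolPTDiag
  split_ifs
  · exact le_rfl
  · positivity
  · exact div_nonneg (mul_nonneg (by linarith) (by linarith)) (by norm_num)
  · exact (depolEigSym_pos q).le

theorem depolEigAntisym_nonneg_iff (q : ℝ) :
    0 ≤ depolEigAntisym q ↔ (1 - 3 * √3) / 13 ≤ q ∧ q ≤ (1 + √3) / (4 + √3) := by
  have h3 : √3 ^ 2 = 3 := Real.sq_sqrt (by norm_num)
  have hroot : (1 + √3) / (4 + √3) = (1 + 3 * √3) / 13 := by
    rw [div_eq_div_iff (by positivity) (by norm_num)]
    linear_combination -3 * h3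
  have hfac : depolEigAntisym q = (13 * q - 1 + 3 * √3) * (1 + 3 * √3 - 13 * q) / 234 := by
    unfold depolEigAntisym
    linear_combination (-1 / 26) * h3
  rw [hroot, hfac, div_le_iff₀ (by norm_num), le_div_iff₀ (by norm_num)]
  constructor
  · intro h
    constructor <;> nlinarith [Real.sqrt_pos.2 (show (0 : ℝ) < 3 by norm_num)]
  · rintro ⟨h₁, h₂⟩
    have := mul_nonneg (sub_nonneg.2 h₁) (sub_nonneg.2 h₂)
    linarith

theorem ptB_tensorMap_depol_psiTwo (q : ℝ) :
    ptB (tensorMap (depol 3 q) (depol 3 q) (vecMulVec psiTwo (star psiTwo))) =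
      diagonal (fun p => (depolPTDiag q p : ℂ))
        + (depolEigSym q / 2) • vecMulVec symVec (star symVec)
        + (depolEigAntisym q / 2) • vecMulVec antisymVec (star antisymVec) := by
  rw [tensorMap_depol, ptrace2_psiTwo, ptrace1_psiTwo, trace_psiTwo]
  ext ⟨i, k⟩ ⟨j, l⟩
  fin_cases i <;> fin_cases k <;> fin_cases j <;> fin_cases l <;>
    simp only [ptB, of_apply, Matrix.add_apply, Matrix.smul_apply, vecMulVec_psiTwo_apply] <;>
    simp [depolPTDiag, symVec, antisymVec, depolEigSym, depolEigAntisym, one_apply,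
      vecMulVec_apply] <;>
    ring

theorem antisymVec_dotProduct_ptB_mulVec (q : ℝ) :
    star antisymVec ⬝ᵥ
        ptB (tensorMap (depol 3 q) (depol 3 q) (vecMulVec psiTwo (star psiTwo))) *ᵥ antisymVec =
      (2 * depolEigAntisym q : ℝ) := by
  rw [ptB_tensorMap_depol_psiTwo]
  simp [antisymVec, symVec, depolPTDiag, dotProduct, mulVec, vecMulVec_apply,
    Fintype.sum_prod_type, Fin.sum_univ_three]
  ring

/-- for the two-qutrit local depolarizing channel applied to
|ψ⟩ = (|11⟩+|22⟩)/√2, the partial transpose of the output is positive semidefinite iff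
q ≤ (1+√3)/(4+√3). -/
theorem qutrit_depol_PPT_iff (q : ℝ) (hq : -(1 / 8 : ℝ) ≤ q) :
    (ptB (tensorMap (depol 3 q) (depol 3 q) (vecMulVec psiTwo (star psiTwo)))).PosSemidef ↔
      q ≤ (1 + Real.sqrt 3) / (4 + Real.sqrt 3) := by
  have hlow : (1 - 3 * √3) / 13 ≤ q := by
    have : 1 < √3 := by rw [Real.lt_sqrt] <;> norm_num
    linarith
  rw [← (depolEigAntisym_nonneg_iff q).trans (and_iff_right hlow)]
  constructor
  · intro h
    have hform := h.dotProduct_mulVec_nonneg antisymVec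
    rw [antisymVec_dotProduct_ptB_mulVec, Complex.zero_le_real] at hform
    linarith
  · intro h
    have hq1 : q ≤ 1 := by
      unfold depolEigAntisym at h
      nlinarith
    rw [ptB_tensorMap_depol_psiTwo]
    refine ((PosSemidef.diagonal fun p => ?_).add
      ((posSemidef_vecMulVec_self_star _).smul (by linarith [depolEigSym_pos q]))).add
      ((posSemidef_vecMulVec_self_star _).smul (by linarith))
    exact Complex.zero_le_real.2 (depolPTDiag_nonneg (by linarith) hq1 p)
end
end

section
/- There exists a gap exhibiting non-multiplicativity of entanglement binding: for the qutrit depolarizing channel Φ_q with q = 0.4 ∈ (1/4, (1+√3)/(4+√3)), the Choi operator of Φ_q is not PPT (so Φ_q ⊗ Id is not PPT-inducing), yet (Id ⊗ T)[(Φ_q ⊗ Φ_q)[|ψ⟩⟨ψ|]] ≥ 0 for the maximally entangled rank-2 input |ψ⟩ = (|11⟩+|22⟩)/√2. -/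
/-!
The partial transpose of the Choi operator of `Φ_q` on `ℂ^d` is `(1 - q)/d² · 1 + (q/d) · SWAP`,
so the antisymmetric vector `e₀₁ - e₁₀` is an eigenvector with eigenvalue `(1 - q)/d² - q/d`,
which is negative once `q > 1/(d + 1)`.

Expanding `Φ_q ⊗ Φ_q` by linearity, the partial transpose of its output on `|ψ⟩⟨ψ|` is a diagonal
matrix plus `(q²/2) |s⟩⟨s|` with `s = e₀₁ + e₁₀`. The only diagonal entry that can become negative
is `(2 + 2q - 13q²)/18` (the eigenvalue on `e₀₁ - e₁₀`), whose positive root is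
`(1 + √3)/(4 + √3)`.
-/

open Matrix Kronecker BigOperators ComplexOrder

noncomputable section

lemma Matrix.PosSemidef.nonneg_of_mulVec_eq_smul {n : Type*} [Fintype n] {M : Matrix n n ℂ}
    (hM : M.PosSemidef) {x : n → ℂ} (hx : x ≠ 0) {μ : ℝ} (h : M *ᵥ x = (μ : ℂ) • x) :
    0 ≤ μ := by
  have hquad := hM.dotProduct_mulVec_nonneg x
  rw [h, dotProduct_smul, smul_eq_mul] at hquad
  by_contra! hμ
  exact (mul_neg_of_neg_of_pos (by exact_mod_cast hμ : (μ : ℂ) < 0)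
    (dotProduct_star_self_pos_iff.mpr hx)).not_ge hquad

def maxEntVec (ι : Type*) [Fintype ι] [DecidableEq ι] : ι × ι → ℂ :=
  fun p => if p.1 = p.2 then ((Real.sqrt (Fintype.card ι))⁻¹ : ℝ) else 0

lemma maxEntProj_eq_vecMulVec (ι : Type*) [Fintype ι] [DecidableEq ι] :
    maxEntProj ι = vecMulVec (maxEntVec ι) (star (maxEntVec ι)) := by
  have hsqrt : ((Real.sqrt (Fintype.card ι) : ℂ))⁻¹ * (Real.sqrt (Fintype.card ι) : ℂ)⁻¹ =
      (Fintype.card ι : ℂ)⁻¹ := by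
    rw [← mul_inv, ← Complex.ofReal_mul, Real.mul_self_sqrt (Nat.cast_nonneg _)]
    norm_num
  ext p r
  simp only [maxEntProj, maxEntVec, Matrix.of_apply, vecMulVec_apply, Pi.star_apply]
  split_ifs <;> simp_all

lemma isState_maxEntProj (ι : Type*) [Fintype ι] [DecidableEq ι] [Nonempty ι] :
    IsState (maxEntProj ι) := by
  refine ⟨maxEntProj_eq_vecMulVec ι ▸ posSemidef_vecMulVec_self_star _, ?_⟩
  simp [Matrix.trace, maxEntProj, Fintype.sum_prod_type, Finset.sum_ite_eq]

lemma depol_apply (d : ℕ) (q : ℝ) (X : Matrix (Fin d) (Fin d) ℂ) (i j : Fin d) :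
    depol d q X i j = q * X i j + ((1 - q) / d : ℂ) * (if i = j then X.trace else 0) := by
  simp only [depol, Matrix.add_apply, Matrix.smul_apply, Matrix.one_apply, smul_eq_mul,
    Complex.ofReal_sub, Complex.ofReal_one]
  split_ifs <;> ring

lemma ptB_choi_depol_apply (d : ℕ) (q : ℝ) (p r : Fin d × Fin d) :
    ptB (choi (depol d q)) p r =
      (q / d : ℂ) * (if p.1 = r.2 ∧ p.2 = r.1 then 1 else 0) +
        ((1 - q) / d ^ 2 : ℂ) * (if p = r then 1 else 0) := by
  obtain ⟨a, b⟩ := p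
  obtain ⟨c, e⟩ := r
  simp only [ptB, choi, amplify, maxEntProj, depol_apply, Matrix.of_apply, Matrix.trace,
    Matrix.diag, Fintype.card_fin, Prod.mk.injEq]
  rcases eq_or_ne e b with rfl | heb
  · simp only [and_self, Finset.sum_ite_eq', Finset.mem_univ, if_true]
    split_ifs <;> grind
  · have hnot (x : Fin d) : ¬(x = e ∧ x = b) := fun h => heb (h.1.symm.trans h.2)
    simp only [hnot, if_false, Finset.sum_const_zero]
    split_ifs <;> grind

lemma ptB_choi_depol_mulVec_antisymm (d : ℕ) (q : ℝ) {a b : Fin d} (hab : a ≠ b) :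
    ptB (choi (depol d q)) *ᵥ (Pi.single (a, b) 1 - Pi.single (b, a) 1) =
      (((1 - q) / d ^ 2 - q / d : ℝ) : ℂ) • (Pi.single (a, b) 1 - Pi.single (b, a) 1) := by
  ext ⟨i, j⟩
  simp only [Matrix.mulVec_sub, Matrix.mulVec_single_one, Pi.sub_apply, Pi.smul_apply,
    Matrix.col_apply, ptB_choi_depol_apply, Pi.single_apply, Prod.mk.injEq, smul_eq_mul]
  push_cast
  split_ifs <;> grind

theorem not_posSemidef_ptB_choi_depol {d : ℕ} (hd : 2 ≤ d) {q : ℝ} (hq : 1 / (d + 1) < q) :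
    ¬(ptB (choi (depol d q))).PosSemidef := by
  intro hpsd
  let a : Fin d := ⟨0, by omega⟩
  let b : Fin d := ⟨1, by omega⟩
  have hab : a ≠ b := by simp [a, b, Fin.ext_iff]
  have hx : (Pi.single (a, b) 1 - Pi.single (b, a) 1 : Fin d × Fin d → ℂ) ≠ 0 := by
    intro h
    simpa [hab] using congr_fun h (a, b)
  have hμ := hpsd.nonneg_of_mulVec_eq_smul hx (ptB_choi_depol_mulVec_antisymm d q hab)
  have hd0 : (0 : ℝ) < d := by positivity
  rw [div_lt_iff₀ (by positivity)] at hq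
  rw [sub_nonneg, div_le_div_iff₀ hd0 (by positivity)] at hμ
  nlinarith

lemma tensorMap_depol_apply (d : ℕ) (q : ℝ) (M : Matrix (Fin d × Fin d) (Fin d × Fin d) ℂ)
    (a b c e : Fin d) :
    tensorMap (depol d q) (depol d q) M (a, b) (c, e) =
      (q : ℂ) ^ 2 * M (a, b) (c, e) +
        (q * (1 - q) / d : ℂ) * ((if b = e then ∑ k, M (a, k) (c, k) else 0) +
          (if a = c then ∑ k, M (k, b) (k, e) else 0)) +
        ((1 - q) ^ 2 / d ^ 2 : ℂ) * (if a = c ∧ b = e then ∑ k, ∑ l, M (k, l) (k, l) else 0) := by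
  simp only [tensorMap, amplify, amplifyL, Matrix.of_apply, depol_apply, Matrix.trace,
    Matrix.diag]
  by_cases hac : a = c <;> by_cases hbe : b = e <;>
    simp only [hac, hbe, if_true, if_false, and_true, and_false, mul_zero, add_zero,
      Finset.sum_add_distrib, ← Finset.mul_sum] <;> ring

lemma psiTwo_mul_star_psiTwo (p r : Fin 3 × Fin 3) :
    psiTwo p * star (psiTwo r) =
      if ((p.1 = 0 ∧ p.2 = 0) ∨ (p.1 = 1 ∧ p.2 = 1)) ∧ ((r.1 = 0 ∧ r.2 = 0) ∨ (r.1 = 1 ∧ r.2 = 1))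
      then 1 / 2 else 0 := by
  have hsqrt : ((Real.sqrt 2 : ℂ))⁻¹ * (Real.sqrt 2 : ℂ)⁻¹ = 1 / 2 := by
    rw [← mul_inv, ← Complex.ofReal_mul, Real.mul_self_sqrt zero_le_two]
    norm_num
  simp only [psiTwo]
  split_ifs <;> simp_all

def psiTwoOutputDiag (q : ℝ) : Fin 3 × Fin 3 → ℝ := fun p =>
  (!![(1 - q) ^ 2 / 9 + q * (1 - q) / 3 + q ^ 2 / 2, (1 - q) ^ 2 / 9 + q * (1 - q) / 3 - q ^ 2 / 2,
      (1 - q) ^ 2 / 9 + q * (1 - q) / 6;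
    (1 - q) ^ 2 / 9 + q * (1 - q) / 3 - q ^ 2 / 2, (1 - q) ^ 2 / 9 + q * (1 - q) / 3 + q ^ 2 / 2,
      (1 - q) ^ 2 / 9 + q * (1 - q) / 6;
    (1 - q) ^ 2 / 9 + q * (1 - q) / 6, (1 - q) ^ 2 / 9 + q * (1 - q) / 6, (1 - q) ^ 2 / 9] :
    Matrix (Fin 3) (Fin 3) ℝ) p.1 p.2

def symVec01 : Fin 3 × Fin 3 → ℂ := Pi.single (0, 1) 1 + Pi.single (1, 0) 1

lemma ptB_tensorMap_depol_psiTwo_eq (q : ℝ) :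
    ptB (tensorMap (depol 3 q) (depol 3 q) (vecMulVec psiTwo (star psiTwo))) =
      diagonal (fun p => (psiTwoOutputDiag q p : ℂ)) +
        ((q ^ 2 / 2 : ℝ) : ℂ) • vecMulVec symVec01 (star symVec01) := by
  ext ⟨a, b⟩ ⟨c, e⟩
  simp only [ptB, Matrix.of_apply, tensorMap_depol_apply, vecMulVec_apply, Pi.star_apply,
    psiTwo_mul_star_psiTwo, Fin.sum_univ_three]
  fin_cases a <;> fin_cases b <;> fin_cases c <;> fin_cases e <;>
    simp [psiTwoOutputDiag, symVec01, vecMulVec_apply] <;> ring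

lemma psiTwoOutputDiag_nonneg {q : ℝ} (hq0 : 0 ≤ q) (hq : 13 * q ^ 2 ≤ 2 + 2 * q) :
    0 ≤ psiTwoOutputDiag q := by
  have hq1 : q ≤ 1 := by nlinarith
  intro p
  fin_cases p <;> simp [psiTwoOutputDiag] <;> nlinarith

theorem posSemidef_ptB_tensorMap_depol_psiTwo {q : ℝ} (hq0 : 0 ≤ q)
    (hq : q ≤ (1 + √3) / (4 + √3)) :
    (ptB (tensorMap (depol 3 q) (depol 3 q) (vecMulVec psiTwo (star psiTwo)))).PosSemidef := by
  have hpoly : 13 * q ^ 2 ≤ 2 + 2 * q := by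
    have h3 : √3 ^ 2 = 3 := Real.sq_sqrt (by norm_num)
    have hs : 1 ≤ √3 := by nlinarith [Real.sqrt_nonneg 3]
    rw [le_div_iff₀ (by positivity)] at hq
    have hlin : 13 * q - 1 ≤ 3 * √3 := by nlinarith
    nlinarith [mul_nonneg (sub_nonneg.mpr hlin) (by linarith : 0 ≤ 3 * √3 + 13 * q - 1)]
  rw [ptB_tensorMap_depol_psiTwo_eq]
  refine .add (.diagonal fun p => ?_) ((posSemidef_vecMulVec_self_star _).smul ?_)
  · exact Complex.zero_le_real.mpr (psiTwoOutputDiag_nonneg hq0 hpoly p)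
  · exact Complex.zero_le_real.mpr (by positivity)

/-- the gap at q = 0.4 ∈ (1/4, (1+√3)/(4+√3)): the Choi operator of the
qutrit depolarizing channel is not PPT (so Φ_q ⊗ Id is not PPT-inducing), yet the output
of Φ_q ⊗ Φ_q on the rank-2 maximally entangled input is PPT. -/
theorem depol_gap :
    (1 / 4 : ℝ) < 2 / 5 ∧ (2 / 5 : ℝ) < (1 + Real.sqrt 3) / (4 + Real.sqrt 3) ∧
    ¬ (ptB (choi (depol 3 (2 / 5)))).PosSemidef ∧
    ¬ (∀ ρ : Matrix (Fin 3 × Fin 3) (Fin 3 × Fin 3) ℂ, IsState ρ →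
        (ptB (amplify (depol 3 (2 / 5)) ρ)).PosSemidef) ∧
    (ptB (tensorMap (depol 3 (2 / 5)) (depol 3 (2 / 5))
      (vecMulVec psiTwo (star psiTwo)))).PosSemidef := by
  have hgap : (2 / 5 : ℝ) < (1 + √3) / (4 + √3) := by
    have hs : 1 < √3 := (Real.lt_sqrt zero_le_one).mpr (by norm_num)
    rw [lt_div_iff₀ (by positivity)]
    linarith
  have hchoi : ¬(ptB (choi (depol 3 (2 / 5)))).PosSemidef :=
    not_posSemidef_ptB_choi_depol (by norm_num) (by norm_num)
  exact ⟨by norm_num, hgap, hchoi, fun h => hchoi (h _ (isState_maxEntProj _)),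
    posSemidef_ptB_tensorMap_depol_psiTwo (by norm_num) hgap.le⟩
end
end
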